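/- Let Uⁿ⁺¹ - Uⁿ = 2φⁿ(φⁿ⁺¹ - φⁿ) pointwise. Then Uⁿ⁺¹ - ((φⁿ⁺¹)² - 1) = Uⁿ - ((φⁿ)² - 1) - (φⁿ⁺¹-φⁿ)². Consequently, if U⁰ = (φ⁰)² - 1 and |φᵏ⁺¹ - φᵏ| ≤ Cδt for all 0 ≤ k ≤ n, then |Uⁿ⁺¹ - ((φⁿ⁺¹)² - 1)| ≤ (n+1)C²δt². -/

import Mathlib

/-!
Writing `eᵏ = Uᵏ - ((φᵏ)² - 1)`, the update rule gives `eᵏ⁺¹ = eᵏ - (φᵏ⁺¹ - φᵏ)²` by completing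
the square, so each step moves `e` by at most `C²δt²`; starting from `e⁰ = 0`, after `n + 1`
steps `|eⁿ⁺¹| ≤ (n + 1)C²δt²`.
-/

theorem sub_sq_sub_eq_of_sub_eq_two_mul_mul {R : Type*} [CommRing R] {u u' a b : R} (c : R)
    (hu : u' - u = 2 * a * (b - a)) :
    u' - (b ^ 2 - c) = u - (a ^ 2 - c) - (b - a) ^ 2 := by
  linear_combination hu

theorem dist_le_mul_of_forall_dist_succ_le {α : Type*} [PseudoMetricSpace α] {f : ℕ → α}
    (m : ℕ) {ε : ℝ} (hf : ∀ k < m, dist (f k) (f (k + 1)) ≤ ε) :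
    dist (f 0) (f m) ≤ m * ε := by
  simpa using dist_le_range_sum_of_dist_le (d := fun _ ↦ ε) m (hf _)

theorem stmt16_general (n : ℕ) (C δt : ℝ)
    (φ U : ℕ → ℝ)
    (hrec : ∀ k ≤ n, U (k + 1) - U k = 2 * φ k * (φ (k + 1) - φ k)) :
    (∀ k ≤ n, U (k + 1) - ((φ (k + 1)) ^ 2 - 1)
        = U k - ((φ k) ^ 2 - 1) - (φ (k + 1) - φ k) ^ 2) ∧
    (U 0 = (φ 0) ^ 2 - 1 → (∀ k ≤ n, |φ (k + 1) - φ k| ≤ C * δt) →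
      |U (n + 1) - ((φ (n + 1)) ^ 2 - 1)| ≤ ((n : ℝ) + 1) * C ^ 2 * δt ^ 2) := by
  have step := fun k hk ↦ sub_sq_sub_eq_of_sub_eq_two_mul_mul 1 (hrec k hk)
  refine ⟨step, fun h0 hφ ↦ ?_⟩
  have hstep : ∀ k < n + 1, dist (U k - (φ k ^ 2 - 1)) (U (k + 1) - (φ (k + 1) ^ 2 - 1))
      ≤ C ^ 2 * δt ^ 2 := by
    intro k hk
    replace hk : k ≤ n := Nat.lt_succ_iff.mp hk
    rw [step k hk, Real.dist_eq, sub_sub_cancel, abs_sq, ← mul_pow, ← sq_abs]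
    exact pow_le_pow_left₀ (abs_nonneg _) (hφ k hk) 2
  have hdrift := dist_le_mul_of_forall_dist_succ_le (n + 1) hstep
  rw [h0, sub_self, dist_zero_left, Real.norm_eq_abs] at hdrift
  push_cast at hdrift
  linarith

/-- IEQ consistency: if `Uᵏ⁺¹ - Uᵏ = 2φᵏ(φᵏ⁺¹-φᵏ)`, then
`Uᵏ⁺¹ - ((φᵏ⁺¹)²-1) = Uᵏ - ((φᵏ)²-1) - (φᵏ⁺¹-φᵏ)²`; consequently, if
`U⁰ = (φ⁰)²-1` and `|φᵏ⁺¹-φᵏ| ≤ Cδt` for `0 ≤ k ≤ n`, then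
`|Uⁿ⁺¹ - ((φⁿ⁺¹)²-1)| ≤ (n+1)C²δt²`. -/
theorem stmt16 (n : ℕ) (C δt : ℝ) (hC : 0 < C) (hδt : 0 < δt)
    (φ U : ℕ → ℝ)
    (hrec : ∀ k ≤ n, U (k + 1) - U k = 2 * φ k * (φ (k + 1) - φ k)) :
    (∀ k ≤ n, U (k + 1) - ((φ (k + 1)) ^ 2 - 1)
        = U k - ((φ k) ^ 2 - 1) - (φ (k + 1) - φ k) ^ 2) ∧
    (U 0 = (φ 0) ^ 2 - 1 → (∀ k ≤ n, |φ (k + 1) - φ k| ≤ C * δt) →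
      |U (n + 1) - ((φ (n + 1)) ^ 2 - 1)| ≤ ((n : ℝ) + 1) * C ^ 2 * δt ^ 2) :=
  stmt16_general n C δt φ U hrec
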